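/- arXiv:2107.14624 — 7 statements merged into one kernel-verified Lean document; each statement's English description precedes it below -/
import Mathlib

section
/- For R' ≥ 0 and sequences of nonnegative reals (a_k), (b_k), the Cauchy-product-type estimate holds: Σ_k k!^{R'} c^k Σ_{j=0}^{k} a_j b_{k−j} ≤ (Σ_k k!^{R'} (2^{R'} c)^k a_k)·(Σ_k k!^{R'} (2^{R'} c)^k b_k), using binom(k,j)^{R'} ≤ 2^{kR'} and j!·(k−j)! ≤ k! for all 0 ≤ j ≤ k. (This is the submultiplicativity estimate q_{R,c}(φψ) ≤ q_{R,2^R c}(φ)·q_{R,2^R c}(ψ) for R-entire seminorms; for R' ≤ 0 the seminorms are submultiplicative with the same c.) -/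
open scoped ENNReal Nat
open Finset

/-!
Since `(i + j).choose i ≤ 2 ^ (i + j)`, the weight `k!^R' c^k` at `k = i + j` is at most the
product of the weights `i!^R' (2^R' c)^i` and `j!^R' (2^R' c)^j`. Expanding the right-hand side
by the Cauchy product formula, which holds unconditionally in `ℝ≥0∞`, the estimate follows term by
term.
-/

theorem Nat.factorial_add_le_factorial_mul_factorial_mul_two_pow (i j : ℕ) :
    (i + j)! ≤ i ! * j ! * 2 ^ (i + j) := by
  rw [← Nat.add_choose_mul_factorial_mul_factorial, mul_assoc, mul_comm]
  gcongr
  exact Nat.choose_le_two_pow _ _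

protected theorem ENNReal.tsum_mul_tsum_eq_tsum_sum_range (f g : ℕ → ℝ≥0∞) :
    (∑' n, f n) * ∑' n, g n = ∑' n, ∑ k ∈ range (n + 1), f k * g (n - k) := by
  simp_rw [← Nat.sum_antidiagonal_eq_sum_range_succ fun k l ↦ f k * g l]
  conv_rhs => congr; ext; rw [← Finset.sum_finset_coe, ← tsum_fintype (L := .unconditional _)]
  rw [← ENNReal.tsum_mul_right]
  simp_rw [← ENNReal.tsum_mul_left]
  rw [← ENNReal.tsum_prod (f := fun i j ↦ f i * g j),
    ← HasAntidiagonal.sigmaAntidiagonalEquivProd.tsum_eq, ENNReal.tsum_sigma']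
  rfl

theorem ENNReal.tsum_mul_sum_range_le_mul_tsum {w v a b : ℕ → ℝ≥0∞}
    (hwv : ∀ i j, w (i + j) ≤ v i * v j) :
    ∑' k, w k * ∑ j ∈ range (k + 1), a j * b (k - j) ≤
      (∑' k, v k * a k) * (∑' k, v k * b k) := by
  rw [ENNReal.tsum_mul_tsum_eq_tsum_sum_range]
  gcongr with k
  rw [mul_sum]
  refine sum_le_sum fun j hj ↦ ?_
  have hweight := hwv j (k - j)
  rw [Nat.add_sub_cancel' (Nat.lt_succ_iff.mp (mem_range.mp hj))] at hweight
  calc w k * (a j * b (k - j)) ≤ v j * v (k - j) * (a j * b (k - j)) := by gcongr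
    _ = v j * a j * (v (k - j) * b (k - j)) := mul_mul_mul_comm _ _ _ _

theorem ENNReal.factorial_rpow_mul_pow_add_le {R : ℝ} (hR : 0 ≤ R) (c : ℝ≥0∞) (i j : ℕ) :
    ((i + j)! : ℝ≥0∞) ^ R * c ^ (i + j) ≤
      ((i ! : ℝ≥0∞) ^ R * (2 ^ R * c) ^ i) * ((j ! : ℝ≥0∞) ^ R * (2 ^ R * c) ^ j) := by
  have hfact :
      ((i + j)! : ℝ≥0∞) ^ R ≤ (i ! : ℝ≥0∞) ^ R * (j ! : ℝ≥0∞) ^ R * (2 ^ R) ^ (i + j) := by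
    rw [← ENNReal.rpow_natCast, ← ENNReal.rpow_mul, mul_comm R, ENNReal.rpow_mul,
      ENNReal.rpow_natCast, ← ENNReal.mul_rpow_of_nonneg _ _ hR,
      ← ENNReal.mul_rpow_of_nonneg _ _ hR]
    gcongr
    exact_mod_cast Nat.factorial_add_le_factorial_mul_factorial_mul_two_pow i j
  calc ((i + j)! : ℝ≥0∞) ^ R * c ^ (i + j)
      ≤ (i ! : ℝ≥0∞) ^ R * (j ! : ℝ≥0∞) ^ R * (2 ^ R) ^ (i + j) * c ^ (i + j) := by gcongr
    _ = _ := by ring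

/-- Cauchy-product-type estimate for the `R'`-seminorms (`R' ≥ 0`):
`Σ_k k!^{R'} c^k Σ_{j=0}^{k} a_j b_{k−j}
  ≤ (Σ_k k!^{R'} (2^{R'} c)^k a_k) · (Σ_k k!^{R'} (2^{R'} c)^k b_k)`
for nonnegative sequences `(a_k)`, `(b_k)`; this is the submultiplicativity estimate
`q_{R,c}(φψ) ≤ q_{R,2^R c}(φ) · q_{R,2^R c}(ψ)`. -/
theorem cauchy_product_Rprime_estimate (R' : ℝ) (hR' : 0 ≤ R') (c : ℝ≥0∞)
    (a b : ℕ → ℝ≥0∞) :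
    ∑' k : ℕ, (k.factorial : ℝ≥0∞) ^ R' * c ^ k *
        ∑ j ∈ Finset.range (k + 1), a j * b (k - j) ≤
      (∑' k : ℕ, (k.factorial : ℝ≥0∞) ^ R' * ((2 : ℝ≥0∞) ^ R' * c) ^ k * a k) *
        (∑' k : ℕ, (k.factorial : ℝ≥0∞) ^ R' * ((2 : ℝ≥0∞) ^ R' * c) ^ k * b k) :=
  ENNReal.tsum_mul_sum_range_le_mul_tsum (ENNReal.factorial_rpow_mul_pow_add_le hR' c)
end

section
/- Let φ be a smooth function on a Lie group G whose Lie-Taylor majorant coefficients c_k(φ) = (1/k!)·Σ_{α∈{1,…,n}^k} |(L_{X_{α_1}}⋯L_{X_{α_k}} φ)(e)| are finite. Then for any ξ in the Lie algebra, c_k(L_{X_ξ} φ) ≤ ‖ξ‖_∞ · (k+1)·c_{k+1}(φ), and hence the majorant of L_{X_ξ}φ is dominated by ‖ξ‖_∞ times the derivative of the majorant of φ: |M_{L_{X_ξ}φ}(z)| ≤ ‖ξ‖_∞ · M'_φ(|z|). -/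
open scoped ENNReal

/-- Apply the operators `L i` along a list of indices, head of the list outermost. -/
def chainApply {A : Type*} [AddCommGroup A] [Module ℂ A] {n : ℕ}
    (L : Fin n → A →ₗ[ℂ] A) (l : List (Fin n)) (x : A) : A :=
  l.foldr (fun i y => L i y) x

/-- The `k`-th Lie-Taylor majorant coefficient
`c_k(φ) = (1/k!) Σ_{α∈{1,…,n}^k} |(L_{X_{α₁}}⋯L_{X_{α_k}} φ)(e)|`, where `ev` is
evaluation at the unit and `L i` is the Lie derivative along the `i`-th basis field. -/
noncomputable def ck {A : Type*} [AddCommGroup A] [Module ℂ A] {n : ℕ}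
    (ev : A →ₗ[ℂ] ℂ) (L : Fin n → A →ₗ[ℂ] A) (k : ℕ) (φ : A) : ℝ :=
  ((k.factorial : ℝ))⁻¹ * ∑ α : Fin k → Fin n, ‖ev (chainApply L (List.ofFn α) φ)‖

lemma chainApply_eq_lm {A : Type*} [AddCommGroup A] [Module ℂ A] {n : ℕ}
    (L : Fin n → A →ₗ[ℂ] A) (l : List (Fin n)) (x : A) :
    chainApply L l x = (l.foldr (fun i g => (L i).comp g) LinearMap.id) x := by
  induction l with
  | nil => rfl
  | cons a l ih => simp [chainApply] at ih ⊢; rw [ih]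

lemma chainApply_append {A : Type*} [AddCommGroup A] [Module ℂ A] {n : ℕ}
    (L : Fin n → A →ₗ[ℂ] A) (l : List (Fin n)) (i : Fin n) (x : A) :
    chainApply L (l ++ [i]) x = chainApply L l (L i x) := by
  simp [chainApply, List.foldr_append]

lemma ofFn_snoc {n k : ℕ} (α : Fin k → Fin n) (i : Fin n) :
    List.ofFn (Fin.snoc α i) = List.ofFn α ++ [i] := by
  rw [List.ofFn_succ']
  simp [Fin.snoc_last, List.concat_eq_append]

/-- For a smooth function `φ` with Lie-Taylor coefficients `c_k(φ)` and
`ξ = Σᵢ ξⁱ eᵢ` in the Lie algebra, `c_k(L_{X_ξ}φ) ≤ ‖ξ‖_∞ (k+1) c_{k+1}(φ)`, and hence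
the Lie-Taylor majorant of `L_{X_ξ}φ` is dominated by `‖ξ‖_∞` times the derivative of
the majorant of `φ`: `|M_{L_{X_ξ}φ}(z)| ≤ ‖ξ‖_∞ · M'_φ(|z|)`. -/
theorem lieDeriv_majorant_estimate {A : Type*} [AddCommGroup A] [Module ℂ A] {n : ℕ}
    (ev : A →ₗ[ℂ] ℂ) (L : Fin n → A →ₗ[ℂ] A) (φ : A) (ξ : Fin n → ℂ) :
    (∀ k : ℕ, ck ev L k ((∑ i, ξ i • L i) φ) ≤ ‖ξ‖ * (((k : ℝ) + 1) * ck ev L (k + 1) φ)) ∧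
    (∀ z : ℂ,
      ∑' k : ℕ, ENNReal.ofReal (ck ev L k ((∑ i, ξ i • L i) φ) * ‖z‖ ^ k) ≤
        ENNReal.ofReal ‖ξ‖ *
          ∑' k : ℕ, ENNReal.ofReal (((k : ℝ) + 1) * ck ev L (k + 1) φ * ‖z‖ ^ k)) := by
  have hck : ∀ k : ℕ, ck ev L k ((∑ i, ξ i • L i) φ)
      ≤ ‖ξ‖ * (((k : ℝ) + 1) * ck ev L (k + 1) φ) := by
    intro k
    have expand : ∀ α : Fin k → Fin n,
        ev (chainApply L (List.ofFn α) ((∑ i, ξ i • L i) φ))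
          = ∑ i, ξ i * ev (chainApply L (List.ofFn (Fin.snoc α i)) φ) := by
      intro α
      have happ : (∑ i, ξ i • L i) φ = ∑ i, ξ i • L i φ := by
        simp [LinearMap.sum_apply]
      rw [chainApply_eq_lm, happ, map_sum, map_sum]
      refine Finset.sum_congr rfl fun i _ => ?_
      rw [map_smul, map_smul, smul_eq_mul, ofFn_snoc, chainApply_append, chainApply_eq_lm]
    have hterm : ∀ α : Fin k → Fin n,
        ‖ev (chainApply L (List.ofFn α) ((∑ i, ξ i • L i) φ))‖
          ≤ ∑ i, ‖ξ‖ * ‖ev (chainApply L (List.ofFn (Fin.snoc α i)) φ)‖ := by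
      intro α
      rw [expand α]
      refine (norm_sum_le _ _).trans (Finset.sum_le_sum fun i _ => ?_)
      rw [norm_mul]
      exact mul_le_mul_of_nonneg_right (norm_le_pi_norm ξ i) (norm_nonneg _)
    let e : (Fin k → Fin n) × Fin n ≃ (Fin (k+1) → Fin n) :=
      { toFun := fun p => Fin.snoc p.1 p.2
        invFun := fun β => (Fin.init β, β (Fin.last k))
        left_inv := fun p => by simp
        right_inv := fun β => by simp }
    have reindex : ∑ β : Fin (k+1) → Fin n, ‖ev (chainApply L (List.ofFn β) φ)‖
        = ∑ α : Fin k → Fin n, ∑ i, ‖ev (chainApply L (List.ofFn (Fin.snoc α i)) φ)‖ := by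
      have h := Fintype.sum_equiv e
        (fun p : (Fin k → Fin n) × Fin n =>
          ‖ev (chainApply L (List.ofFn (Fin.snoc p.1 p.2)) φ)‖)
        (fun β : Fin (k+1) → Fin n => ‖ev (chainApply L (List.ofFn β) φ)‖)
        (fun p => rfl)
      rw [Fintype.sum_prod_type] at h
      exact h.symm
    have hS : ∑ α : Fin k → Fin n, ‖ev (chainApply L (List.ofFn α) ((∑ i, ξ i • L i) φ))‖
        ≤ ‖ξ‖ * ∑ β : Fin (k+1) → Fin n, ‖ev (chainApply L (List.ofFn β) φ)‖ := by
      rw [reindex, Finset.mul_sum]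
      refine Finset.sum_le_sum fun α _ => (hterm α).trans_eq ?_
      rw [Finset.mul_sum]
    unfold ck
    have hfac : ((k+1).factorial : ℝ) = ((k : ℝ) + 1) * (k.factorial : ℝ) := by
      push_cast [Nat.factorial_succ]; ring
    have hk0 : (0:ℝ) < (k.factorial : ℝ) := by positivity
    calc ((k.factorial : ℝ))⁻¹ * ∑ α : Fin k → Fin n,
            ‖ev (chainApply L (List.ofFn α) ((∑ i, ξ i • L i) φ))‖
        ≤ ((k.factorial : ℝ))⁻¹ *
            (‖ξ‖ * ∑ β : Fin (k+1) → Fin n, ‖ev (chainApply L (List.ofFn β) φ)‖) :=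
          mul_le_mul_of_nonneg_left hS (by positivity)
      _ = ‖ξ‖ * (((k : ℝ) + 1) * (((k+1).factorial : ℝ))⁻¹ *
            ∑ β : Fin (k+1) → Fin n, ‖ev (chainApply L (List.ofFn β) φ)‖) := by
          rw [hfac]
          field_simp
      _ = ‖ξ‖ * (((k : ℝ) + 1) * (((k+1).factorial : ℝ)⁻¹ *
            ∑ β : Fin (k+1) → Fin n, ‖ev (chainApply L (List.ofFn β) φ)‖)) := by ring
  refine ⟨hck, fun z => ?_⟩
  calc ∑' k : ℕ, ENNReal.ofReal (ck ev L k ((∑ i, ξ i • L i) φ) * ‖z‖ ^ k)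
      ≤ ∑' k : ℕ, ENNReal.ofReal ‖ξ‖ *
          ENNReal.ofReal (((k : ℝ) + 1) * ck ev L (k + 1) φ * ‖z‖ ^ k) := by
        refine ENNReal.tsum_le_tsum fun k => ?_
        rw [← ENNReal.ofReal_mul (norm_nonneg ξ)]
        refine ENNReal.ofReal_le_ofReal ?_
        calc ck ev L k ((∑ i, ξ i • L i) φ) * ‖z‖ ^ k
            ≤ (‖ξ‖ * (((k : ℝ) + 1) * ck ev L (k + 1) φ)) * ‖z‖ ^ k :=
              mul_le_mul_of_nonneg_right (hck k) (by positivity)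
          _ = ‖ξ‖ * (((k : ℝ) + 1) * ck ev L (k + 1) φ * ‖z‖ ^ k) := by ring
    _ = ENNReal.ofReal ‖ξ‖ *
          ∑' k : ℕ, ENNReal.ofReal (((k : ℝ) + 1) * ck ev L (k + 1) φ * ‖z‖ ^ k) :=
        ENNReal.tsum_mul_left
end

section
/- Let F be holomorphic on the open disk of radius |z| + ‖ξ‖∞ with nonnegative Taylor coefficients c_k at 0 and suppose c_k(φ∘r_{exp ξ}) ≤ Σ_ℓ ((k+ℓ)!/(k!ℓ!)) c_{k+ℓ}(φ) ‖ξ‖∞^ℓ. Then the translation estimate holds: |M_{φ∘r_{exp ξ}}(z)| ≤ M_φ(|z| + ‖ξ‖∞); in particular for a power series M(z)=Σ c_k z^k with c_k ≥ 0 convergent at radius r = |z|+s, Σ_ℓ (s^ℓ/ℓ!) M^{(ℓ)}(|z|) = M(|z|+s). -/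
/-!
Expanding `(a + s) ^ n` binomially writes `M(a + s) = ∑ c_n (a + s)^n` as the sum of the
nonnegative double series `(k, ℓ) ↦ C(k+ℓ, k) c_{k+ℓ} s^ℓ a^k`. Since the terms are nonnegative,
this double series may be summed in either order: summing over `ℓ` first gives a majorant of
`d_k a^k` for each `k`, and summing over `k` first gives the Taylor series
`∑_ℓ (s^ℓ/ℓ!) M^{(ℓ)}(a)`.
-/

open Finset

section Antidiagonal

variable {A : Type*} [AddCommMonoid A] [HasAntidiagonal A]

theorem HasSum.of_sum_antidiagonal_of_nonneg {g : A × A → ℝ} (hg : 0 ≤ g) {T : ℝ}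
    (h : HasSum (fun n => ∑ p ∈ antidiagonal n, g p) T) : HasSum g T := by
  let e := HasAntidiagonal.sigmaAntidiagonalEquivProd (A := A)
  have fiber_tsum : ∀ n, ∑' p : antidiagonal n, g (e ⟨n, p⟩) = ∑ p ∈ antidiagonal n, g p :=
    fun n => tsum_subtype (antidiagonal n) g
  have hsigma : Summable (g ∘ e) :=
    (summable_sigma_of_nonneg fun x => hg _).2
      ⟨fun n => (hasSum_fintype _).summable, by simpa only [fiber_tsum] using h.summable⟩
  refine (e.summable_iff.1 hsigma).hasSum_iff.2 ?_
  rw [← e.tsum_eq, ← h.tsum_eq, ← tsum_congr fiber_tsum]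
  exact hsigma.tsum_sigma

end Antidiagonal

noncomputable def binomialExpansionTerm (c : ℕ → ℝ) (a s : ℝ) (p : ℕ × ℕ) : ℝ :=
  ((p.1 + p.2).choose p.1 : ℝ) * c (p.1 + p.2) * s ^ p.2 * a ^ p.1

section BinomialExpansion

variable (c : ℕ → ℝ) (a s : ℝ)

theorem sum_antidiagonal_binomialExpansionTerm (n : ℕ) :
    ∑ p ∈ antidiagonal n, binomialExpansionTerm c a s p = c n * (a + s) ^ n := by
  rw [(Commute.all a s).add_pow', mul_sum]
  refine sum_congr rfl fun p hp => ?_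
  obtain rfl := mem_antidiagonal.1 hp
  rw [binomialExpansionTerm, nsmul_eq_mul]
  ring

theorem tsum_binomialExpansionTerm_row (k : ℕ) :
    ∑' ℓ, binomialExpansionTerm c a s (k, ℓ) =
      (∑' ℓ : ℕ, ((k + ℓ).factorial : ℝ) / ((k.factorial : ℝ) * (ℓ.factorial : ℝ)) *
        c (k + ℓ) * s ^ ℓ) * a ^ k := by
  rw [← tsum_mul_right]
  simp only [binomialExpansionTerm, Nat.cast_add_choose]

theorem tsum_binomialExpansionTerm_column (ℓ : ℕ) :
    ∑' k, binomialExpansionTerm c a s (k, ℓ) =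
      s ^ ℓ / (ℓ.factorial : ℝ) *
        ∑' k : ℕ, (((k + ℓ).factorial : ℝ) / (k.factorial : ℝ)) * c (k + ℓ) * a ^ k := by
  rw [← tsum_mul_left]
  refine tsum_congr fun k => ?_
  simp only [binomialExpansionTerm, Nat.cast_add_choose]
  field_simp

variable {c a s}

theorem hasSum_binomialExpansionTerm (hc : ∀ k, 0 ≤ c k) (ha : 0 ≤ a) (hs : 0 ≤ s)
    (hsum : Summable fun n => c n * (a + s) ^ n) :
    HasSum (binomialExpansionTerm c a s) (∑' n, c n * (a + s) ^ n) := by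
  refine HasSum.of_sum_antidiagonal_of_nonneg (fun p => ?_) ?_
  · unfold binomialExpansionTerm
    have := hc (p.1 + p.2)
    positivity
  · simpa only [sum_antidiagonal_binomialExpansionTerm] using hsum.hasSum

end BinomialExpansion

/-- Translation estimate for Lie-Taylor majorants. Let `c k = c_k(φ)` be the
(nonnegative) majorant coefficients of `φ`, summable at radius `a + s`
(`a = |z|`, `s = ‖ξ‖_∞`), and let `d k = c_k(φ ∘ r_{exp ξ})` be nonnegative
coefficients satisfying `d_k ≤ Σ_ℓ ((k+ℓ)!/(k!ℓ!)) c_{k+ℓ} s^ℓ`. Then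
`M_{φ∘r_{exp ξ}}(a) ≤ M_φ(a + s)`, and the power series identity
`Σ_ℓ (s^ℓ/ℓ!) M^{(ℓ)}(a) = M(a + s)` holds, where
`M^{(ℓ)}(a) = Σ_k ((k+ℓ)!/k!) c_{k+ℓ} a^k` is the `ℓ`-th derivative. -/
theorem translation_majorant_estimate (c d : ℕ → ℝ)
    (hc : ∀ k, 0 ≤ c k) (hd0 : ∀ k, 0 ≤ d k)
    (a s : ℝ) (ha : 0 ≤ a) (hs : 0 ≤ s)
    (hsum : Summable fun k : ℕ => c k * (a + s) ^ k)
    (hd : ∀ k : ℕ, d k ≤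
      ∑' ℓ : ℕ, ((k + ℓ).factorial : ℝ) / ((k.factorial : ℝ) * (ℓ.factorial : ℝ)) *
        c (k + ℓ) * s ^ ℓ) :
    (∑' k : ℕ, d k * a ^ k ≤ ∑' k : ℕ, c k * (a + s) ^ k) ∧
    (∑' ℓ : ℕ, s ^ ℓ / (ℓ.factorial : ℝ) *
        ∑' k : ℕ, (((k + ℓ).factorial : ℝ) / (k.factorial : ℝ)) * c (k + ℓ) * a ^ k =
      ∑' k : ℕ, c k * (a + s) ^ k) := by
  have hT := hasSum_binomialExpansionTerm hc ha hs hsum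
  have hsummable := hT.summable
  rw [← hT.tsum_eq, hsummable.tsum_prod]
  constructor
  · have hrow : ∀ k, d k * a ^ k ≤ ∑' ℓ, binomialExpansionTerm c a s (k, ℓ) := fun k => by
      rw [tsum_binomialExpansionTerm_row]
      exact mul_le_mul_of_nonneg_right (hd k) (pow_nonneg ha k)
    exact (hsummable.prod.of_nonneg_of_le (fun k => mul_nonneg (hd0 k) (pow_nonneg ha k)) hrow
      |>.tsum_le_tsum hrow hsummable.prod)
  · simp only [← tsum_binomialExpansionTerm_column]
    exact hsummable.tsum_comm (f := fun k ℓ => binomialExpansionTerm c a s (k, ℓ))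
end

section
/- For pullback by a Lie group morphism Φ : G → H, the Lie-Taylor coefficients satisfy c_k(Φ*φ) ≤ (Dn)^k · c_k(φ), where D is the sup-norm of the matrix of T_e Φ in the chosen bases and n = dim 𝔤; consequently |M_{Φ*φ}(z)| ≤ M_φ(Dn·|z|). -/
open scoped ENNReal

lemma chainApply_cons {A : Type*} [AddCommGroup A] [Module ℂ A] {n : ℕ}
    (L : Fin n → A →ₗ[ℂ] A) (a : Fin n) (l : List (Fin n)) (x : A) :
    chainApply L (a :: l) x = L a (chainApply L l x) := rfl

lemma chain_pull {A B : Type*}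
    [AddCommGroup A] [Module ℂ A] [AddCommGroup B] [Module ℂ B] {n m : ℕ}
    (pull : B →ₗ[ℂ] A)
    (LG : Fin n → A →ₗ[ℂ] A) (LH : Fin m → B →ₗ[ℂ] B)
    (d : Fin n → Fin m → ℂ)
    (hrel : ∀ (i : Fin n) (ψ : B), LG i (pull ψ) = pull (∑ j, d i j • LH j ψ)) :
    ∀ (k : ℕ) (α : Fin k → Fin n) (ψ : B),
      chainApply LG (List.ofFn α) (pull ψ) =
        ∑ β : Fin k → Fin m, (∏ i, d (α i) (β i)) • pull (chainApply LH (List.ofFn β) ψ) := by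
  intro k
  induction k with
  | zero =>
      intro α ψ
      simp [chainApply]
  | succ k ih =>
      intro α ψ
      rw [List.ofFn_succ, chainApply_cons, ih (fun i => α i.succ) ψ, map_sum]
      rw [← Equiv.sum_comp (Fin.consEquiv (fun _ => Fin m))]
      rw [Fintype.sum_prod_type]
      rw [Finset.sum_comm]
      refine Finset.sum_congr rfl fun β _ => ?_
      rw [map_smul, hrel, map_sum]
      rw [Finset.smul_sum]
      refine Finset.sum_congr rfl fun j _ => ?_
      have h1 : List.ofFn (Fin.consEquiv (fun _ => Fin m) (j, β)) = j :: List.ofFn β := by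
        simp [Fin.consEquiv, List.ofFn_succ]
      rw [h1, chainApply_cons]
      rw [map_smul, smul_smul, Fin.prod_univ_succ]
      simp [Fin.consEquiv, mul_comm]

/-- Chain rule for Lie-Taylor coefficients under pullback by a Lie group morphism
`Φ : G → H`: `c_k(Φ*φ) ≤ (Dn)^k c_k(φ)` and consequently
`|M_{Φ*φ}(z)| ≤ M_φ(Dn·|z|)`. Here `pull` is the pullback `Φ*`, `evG`, `evH` are the
evaluations at the respective units (intertwined by `pull` since `Φ(e) = e`),
`LG`, `LH` the Lie derivatives along the chosen bases, `d` the matrix of `T_eΦ` with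
entries bounded by `D`, and `n = dim 𝔤`; the relation `hrel` expresses that `X^G_ξ`
and `X^H_{T_eΦ ξ}` are `Φ`-related. -/
theorem pullback_majorant_estimate {A B : Type*}
    [AddCommGroup A] [Module ℂ A] [AddCommGroup B] [Module ℂ B] {n m : ℕ}
    (pull : B →ₗ[ℂ] A) (evG : A →ₗ[ℂ] ℂ) (evH : B →ₗ[ℂ] ℂ)
    (LG : Fin n → A →ₗ[ℂ] A) (LH : Fin m → B →ₗ[ℂ] B)
    (d : Fin n → Fin m → ℂ) (D : ℝ)
    (hd : ∀ i j, ‖d i j‖ ≤ D)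
    (hev : ∀ ψ : B, evG (pull ψ) = evH ψ)
    (hrel : ∀ (i : Fin n) (ψ : B), LG i (pull ψ) = pull (∑ j, d i j • LH j ψ))
    (φ : B) :
    (∀ k : ℕ, ck evG LG k (pull φ) ≤ (D * n) ^ k * ck evH LH k φ) ∧
    (∀ z : ℂ,
      ∑' k : ℕ, ENNReal.ofReal (ck evG LG k (pull φ) * ‖z‖ ^ k) ≤
        ∑' k : ℕ, ENNReal.ofReal (ck evH LH k φ * (D * n * ‖z‖) ^ k)) := by
  have h1 : ∀ (k : ℕ) (α : Fin k → Fin n),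
      ‖evG (chainApply LG (List.ofFn α) (pull φ))‖ ≤
        ∑ β : Fin k → Fin m,
          (∏ i, ‖d (α i) (β i)‖) * ‖evH (chainApply LH (List.ofFn β) φ)‖ := by
    intro k α
    rw [chain_pull pull LG LH d hrel, map_sum]
    refine (norm_sum_le _ _).trans (le_of_eq ?_)
    refine Finset.sum_congr rfl fun β _ => ?_
    rw [map_smul, hev]
    simp [norm_smul]
  have hmain : ∀ k : ℕ,
      ∑ α : Fin k → Fin n, ‖evG (chainApply LG (List.ofFn α) (pull φ))‖ ≤
        (D * n) ^ k * ∑ β : Fin k → Fin m, ‖evH (chainApply LH (List.ofFn β) φ)‖ := by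
    intro k
    rcases Nat.eq_zero_or_pos k with hk | hk
    · subst hk
      simp [chainApply, hev]
    · rcases Nat.eq_zero_or_pos n with hn | hn
      · subst hn
        haveI : IsEmpty (Fin k → Fin 0) := ⟨fun f => (f ⟨0, hk⟩).elim0⟩
        simp [zero_pow hk.ne']
      · rcases Nat.eq_zero_or_pos m with hm | hm
        · subst hm
          haveI : IsEmpty (Fin k → Fin 0) := ⟨fun f => (f ⟨0, hk⟩).elim0⟩
          have hz : (∑ β : Fin k → Fin 0, ‖evH (chainApply LH (List.ofFn β) φ)‖) = 0 := by
            simp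
          rw [hz, mul_zero]
          refine Finset.sum_nonpos fun α _ => ?_
          simpa using h1 k α
        · have hD : 0 ≤ D := le_trans (norm_nonneg _) (hd ⟨0, hn⟩ ⟨0, hm⟩)
          calc ∑ α : Fin k → Fin n, ‖evG (chainApply LG (List.ofFn α) (pull φ))‖
              ≤ ∑ _α : Fin k → Fin n, ∑ β : Fin k → Fin m,
                  (D ^ k) * ‖evH (chainApply LH (List.ofFn β) φ)‖ := by
                refine Finset.sum_le_sum fun α _ => (h1 k α).trans ?_
                refine Finset.sum_le_sum fun β _ => ?_
                refine mul_le_mul_of_nonneg_right ?_ (norm_nonneg _)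
                calc (∏ i, ‖d (α i) (β i)‖) ≤ ∏ _i : Fin k, D :=
                      Finset.prod_le_prod (fun i _ => norm_nonneg _) (fun i _ => hd _ _)
                  _ = D ^ k := by simp
            _ = (D * n) ^ k * ∑ β : Fin k → Fin m, ‖evH (chainApply LH (List.ofFn β) φ)‖ := by
                rw [Finset.sum_const, ← Finset.mul_sum]
                rw [Finset.card_univ, Fintype.card_fun]
                simp only [Fintype.card_fin, nsmul_eq_mul]
                push_cast
                ring
  have key : ∀ k : ℕ, ck evG LG k (pull φ) ≤ (D * n) ^ k * ck evH LH k φ := by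
    intro k
    unfold ck
    have hfac : (0 : ℝ) ≤ ((k.factorial : ℝ))⁻¹ := by positivity
    calc ((k.factorial : ℝ))⁻¹ * ∑ α : Fin k → Fin n,
          ‖evG (chainApply LG (List.ofFn α) (pull φ))‖
        ≤ ((k.factorial : ℝ))⁻¹ * ((D * n) ^ k *
            ∑ β : Fin k → Fin m, ‖evH (chainApply LH (List.ofFn β) φ)‖) :=
          mul_le_mul_of_nonneg_left (hmain k) hfac
      _ = (D * n) ^ k * (((k.factorial : ℝ))⁻¹ *
            ∑ β : Fin k → Fin m, ‖evH (chainApply LH (List.ofFn β) φ)‖) := by ring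
  refine ⟨key, fun z => ?_⟩
  refine ENNReal.tsum_le_tsum fun k => ENNReal.ofReal_le_ofReal ?_
  rw [mul_pow]
  calc ck evG LG k (pull φ) * ‖z‖ ^ k
      ≤ ((D * n) ^ k * ck evH LH k φ) * ‖z‖ ^ k :=
        mul_le_mul_of_nonneg_right (key k) (by positivity)
    _ = ck evH LH k φ * ((D * n) ^ k * ‖z‖ ^ k) := by ring
end

section
/- Cauchy-estimate for majorants: if M is holomorphic on a neighborhood of the closed disk of radius c + r about 0 with nonnegative Taylor coefficients, then M'(c) ≤ r^{−1}·M(c+r) for all c ≥ 0 and r > 0. Consequently, for an R-entire function φ on a Lie group, q_{R,c}(L_{X_ξ}φ) ≤ ‖ξ‖_∞ · q_{R,c+1}(φ). -/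
/-!
Termwise, `(k+1) a_{k+1} c^k ≤ r⁻¹ a_{k+1} (c+r)^{k+1}`, since `(k+1) c^k r` is a single term of the
binomial expansion of `(c+r)^{k+1}`; summing and dropping the nonnegative constant term gives the
Cauchy estimate. The weights `k!^R` only grow with `k`, so the same index shift bounds the weighted
series of `L_{X_ξ}φ` by that of `φ` at radius `c + 1`.
-/

open Finset

lemma succ_mul_pow_mul_le_add_pow_succ {x y : ℝ} (hx : 0 ≤ x) (hy : 0 ≤ y) (k : ℕ) :
    ((k : ℝ) + 1) * x ^ k * y ≤ (x + y) ^ (k + 1) := by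
  rw [add_pow]
  have hk : k ∈ range (k + 1 + 1) := by simp
  calc ((k : ℝ) + 1) * x ^ k * y = x ^ k * y ^ (k + 1 - k) * ((k + 1).choose k : ℝ) := by
        rw [Nat.choose_succ_self_right, Nat.add_sub_cancel_left, pow_one]
        push_cast
        ring
    _ ≤ ∑ i ∈ range (k + 1 + 1), x ^ i * y ^ (k + 1 - i) * ((k + 1).choose i : ℝ) :=
        single_le_sum (f := fun i => x ^ i * y ^ (k + 1 - i) * ((k + 1).choose i : ℝ))
          (fun i _ => by positivity) hk

lemma succ_mul_pow_le_inv_mul_add_pow_succ {c r : ℝ} (hc : 0 ≤ c) (hr : 0 < r) (k : ℕ) :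
    ((k : ℝ) + 1) * c ^ k ≤ r⁻¹ * (c + r) ^ (k + 1) := by
  rw [le_inv_mul_iff₀ hr, mul_comm r]
  exact succ_mul_pow_mul_le_add_pow_succ hc hr.le k

section Shift

variable {f g : ℕ → ℝ}

lemma summable_of_le_succ (hf : 0 ≤ f) (hg : Summable g) (hfg : ∀ k, f k ≤ g (k + 1)) :
    Summable f :=
  .of_nonneg_of_le hf hfg ((summable_nat_add_iff 1).mpr hg)

lemma tsum_le_tsum_of_le_succ (hf : 0 ≤ f) (hg₀ : 0 ≤ g) (hg : Summable g)
    (hfg : ∀ k, f k ≤ g (k + 1)) : ∑' k, f k ≤ ∑' k, g k :=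
  calc ∑' k, f k ≤ ∑' k, g (k + 1) :=
        (summable_of_le_succ hf hg hfg).tsum_le_tsum hfg ((summable_nat_add_iff 1).mpr hg)
    _ ≤ g 0 + ∑' k, g (k + 1) := le_add_of_nonneg_left (hg₀ 0)
    _ = ∑' k, g k := hg.tsum_eq_zero_add.symm

end Shift

lemma tsum_deriv_majorant_le {a : ℕ → ℝ} (ha : ∀ k, 0 ≤ a k) {c r : ℝ} (hc : 0 ≤ c) (hr : 0 < r)
    (hsum : Summable fun k : ℕ => a k * (c + r) ^ k) :
    ∑' k : ℕ, ((k : ℝ) + 1) * a (k + 1) * c ^ k ≤ r⁻¹ * ∑' k : ℕ, a k * (c + r) ^ k := by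
  rw [← tsum_mul_left]
  refine tsum_le_tsum_of_le_succ (fun k => by have := ha (k + 1); positivity)
    (fun k => by have := ha k; positivity) (hsum.mul_left _) fun k => ?_
  calc ((k : ℝ) + 1) * a (k + 1) * c ^ k = a (k + 1) * (((k : ℝ) + 1) * c ^ k) := by ring
    _ ≤ a (k + 1) * (r⁻¹ * (c + r) ^ (k + 1)) :=
        mul_le_mul_of_nonneg_left (succ_mul_pow_le_inv_mul_add_pow_succ hc hr k) (ha _)
    _ = r⁻¹ * (a (k + 1) * (c + r) ^ (k + 1)) := by ring

lemma tsum_factorial_rpow_mul_pow_le_of_le_deriv {a b : ℕ → ℝ} (ha : ∀ k, 0 ≤ a k) (hb : ∀ k, 0 ≤ b k)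
    {c R s : ℝ} (hc : 0 ≤ c) (hR : 0 ≤ R) (hs : 0 ≤ s)
    (hba : ∀ k : ℕ, b k ≤ s * ((k : ℝ) + 1) * a (k + 1))
    (hsum : Summable fun k : ℕ => (k.factorial : ℝ) ^ R * a k * (c + 1) ^ k) :
    ∑' k : ℕ, (k.factorial : ℝ) ^ R * b k * c ^ k ≤
      s * ∑' k : ℕ, (k.factorial : ℝ) ^ R * a k * (c + 1) ^ k := by
  rw [← tsum_mul_left]
  refine tsum_le_tsum_of_le_succ (fun k => by have := hb k; positivity)
    (fun k => by have := ha k; positivity) (hsum.mul_left _) fun k => ?_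
  have hpow : ((k : ℝ) + 1) * c ^ k ≤ (c + 1) ^ (k + 1) := by
    simpa using succ_mul_pow_le_inv_mul_add_pow_succ hc one_pos k
  have hak := ha (k + 1)
  calc (k.factorial : ℝ) ^ R * b k * c ^ k
      ≤ (k.factorial : ℝ) ^ R * (s * ((k : ℝ) + 1) * a (k + 1)) * c ^ k := by gcongr; exact hba k
    _ = s * a (k + 1) * ((k.factorial : ℝ) ^ R * (((k : ℝ) + 1) * c ^ k)) := by ring
    _ ≤ s * a (k + 1) * (((k + 1).factorial : ℝ) ^ R * (c + 1) ^ (k + 1)) := by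
        gcongr
        exact k.le_succ
    _ = s * (((k + 1).factorial : ℝ) ^ R * a (k + 1) * (c + 1) ^ (k + 1)) := by ring

/-- Cauchy estimate for majorants: if `M(z) = Σ_k a_k z^k` has nonnegative coefficients
and converges on (a neighbourhood of) the closed disk of radius `c + r`, then
`M'(c) ≤ r⁻¹ · M(c+r)` for `c ≥ 0`, `r > 0`. Consequently, for an `R`-entire function
`φ` with coefficients `a_k = c_k(φ)` and `L_{X_ξ}φ` with coefficients `b_k` satisfying
`b_k ≤ ‖ξ‖_∞ (k+1) a_{k+1}` (with `s = ‖ξ‖_∞`), one has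
`q_{R,c}(L_{X_ξ}φ) ≤ ‖ξ‖_∞ · q_{R,c+1}(φ)` for `R ≥ 0`. -/
theorem cauchy_estimate_majorant (a : ℕ → ℝ) (ha : ∀ k, 0 ≤ a k)
    (c r : ℝ) (hc : 0 ≤ c) (hr : 0 < r)
    (hsum : Summable fun k : ℕ => a k * (c + r) ^ k) :
    (∑' k : ℕ, ((k : ℝ) + 1) * a (k + 1) * c ^ k ≤
      r⁻¹ * ∑' k : ℕ, a k * (c + r) ^ k) ∧
    (∀ (R s : ℝ) (b : ℕ → ℝ), 0 ≤ R → 0 ≤ s → (∀ k, 0 ≤ b k) →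
      (∀ k : ℕ, b k ≤ s * ((k : ℝ) + 1) * a (k + 1)) →
      (Summable fun k : ℕ => (k.factorial : ℝ) ^ R * a k * (c + 1) ^ k) →
      ∑' k : ℕ, (k.factorial : ℝ) ^ R * b k * c ^ k ≤
        s * ∑' k : ℕ, (k.factorial : ℝ) ^ R * a k * (c + 1) ^ k) :=
  ⟨tsum_deriv_majorant_le ha hc hr hsum, fun _ _ _ hR hs hb hba hsum' =>
    tsum_factorial_rpow_mul_pow_le_of_le_deriv ha hb hc hR hs hba hsum'⟩
end

section
/- Growth comparison of two seminorm families on entire functions: (i) for R > 0 and ε > 0, sup_{z}|F(z)|exp(−ε|z|^{1/R}) ≤ Σ_k k!^R c_k ((R/ε)^R)^k whenever F(z) = Σ_k c_k z^k with c_k ≥ 0; (ii) conversely for c,ε > 0 with c·(eε/R)^R < 1, Σ_k k!^R c_k c^k ≤ (sup_z |F(z)|exp(−ε|z|^{1/R}))/(1 − c(eε/R)^R). The scalar core: k!^R t^k ≤ sup_{s≥0} s^k exp(...) reduces to sup_{s≥0} s^k e^{−εs^{1/R}} = (kR/(eε))^{kR} and the bound k^k ≤ e^k k!. -/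
/-! Over `s ≥ 0` the weight `s ^ k * exp (-(ε * s ^ (1 / R)))` has maximum `(k R / (e ε)) ^ (k R)`,
attained at `s = (k R / ε) ^ R`: substituting `t = s ^ (1 / R)` reduces this to `x ≤ exp (x - 1)`.
Since `(k / e) ^ k ≤ k ! ≤ k ^ k`, the maximum lies between `k ! ^ R * ((R / (e ε)) ^ R) ^ k` and
`k ! ^ R * ((R / ε) ^ R) ^ k`. The upper bound gives (i) term by term from
`‖F z‖ ≤ ∑ c_k ‖z‖ ^ k`. For (ii), nonnegativity of the coefficients gives
`c_k s ^ k ≤ F s` for real `s ≥ 0`; evaluated at the maximiser, this bounds the `k`-th term of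
`q_{R,c₀}(F)` by `Nb * q ^ k` with `q = c₀ (e ε / R) ^ R`, and the geometric series sums to the claim. -/

open Real Nat

lemma pow_le_exp_one_pow_mul_factorial (k : ℕ) : (k : ℝ) ^ k ≤ exp 1 ^ k * k ! := by
  have h := pow_div_factorial_le_exp (k : ℝ) (Nat.cast_nonneg k) k
  rw [div_le_iff₀ (by positivity), ← exp_one_pow] at h
  linarith

lemma mul_exp_neg_mul_le {b : ℝ} (hb : 0 < b) (t : ℝ) : t * exp (-(b * t)) ≤ (exp 1 * b)⁻¹ := by
  have h := add_one_le_exp (b * t - 1)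
  rw [sub_add_cancel, exp_sub, le_div_iff₀ (exp_pos 1)] at h
  rw [exp_neg, ← div_eq_mul_inv, div_le_iff₀ (exp_pos _), inv_mul_eq_div,
    le_div_iff₀ (by positivity)]
  linarith

lemma rpow_mul_exp_neg_mul_le {ε a t : ℝ} (hε : 0 < ε) (ha : 0 ≤ a) (ht : 0 ≤ t) :
    t ^ a * exp (-(ε * t)) ≤ (a / (exp 1 * ε)) ^ a := by
  rcases ha.eq_or_lt with rfl | ha
  · simpa using mul_nonneg hε.le ht
  have hsplit : t ^ a * exp (-(ε * t)) = (t * exp (-(ε / a * t))) ^ a := by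
    rw [mul_rpow ht (exp_pos _).le, ← exp_mul]
    congr 2
    field_simp
  rw [hsplit]
  refine rpow_le_rpow (by positivity) ((mul_exp_neg_mul_le (by positivity) t).trans_eq ?_) ha.le
  field_simp

lemma div_rpow_mul_exp_neg_mul_div_eq {ε a : ℝ} (hε : 0 < ε) (ha : 0 ≤ a) :
    (a / ε) ^ a * exp (-(ε * (a / ε))) = (a / (exp 1 * ε)) ^ a := by
  rw [mul_div_cancel₀ a hε.ne', div_mul_eq_div_div_swap, div_rpow (by positivity) (exp_pos 1).le,
    exp_one_rpow, exp_neg, ← div_eq_mul_inv]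

lemma mul_rpow_natCast_mul {x y : ℝ} (hx : 0 ≤ x) (hy : 0 ≤ y) (k : ℕ) (R : ℝ) :
    (x * y) ^ ((k : ℝ) * R) = (x ^ k) ^ R * (y ^ R) ^ k := by
  rw [mul_rpow hx hy, rpow_mul hx, rpow_natCast, mul_comm (k : ℝ) R, rpow_mul hy, rpow_natCast]

section Weight

variable {R ε : ℝ}

lemma pow_mul_exp_neg_mul_rpow_le (hR : 0 < R) (hε : 0 < ε) (k : ℕ) {s : ℝ} (hs : 0 ≤ s) :
    s ^ k * exp (-(ε * s ^ (1 / R))) ≤ ((k : ℝ) * R / (exp 1 * ε)) ^ ((k : ℝ) * R) := by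
  have h := rpow_mul_exp_neg_mul_le hε (by positivity : 0 ≤ (k : ℝ) * R) (rpow_nonneg hs (1 / R))
  rwa [← rpow_mul hs, show 1 / R * ((k : ℝ) * R) = k by field_simp, rpow_natCast] at h

lemma pow_mul_exp_neg_mul_rpow_eq (hR : 0 < R) (hε : 0 < ε) (k : ℕ) :
    (((k : ℝ) * R / ε) ^ R) ^ k * exp (-(ε * (((k : ℝ) * R / ε) ^ R) ^ (1 / R))) =
      ((k : ℝ) * R / (exp 1 * ε)) ^ ((k : ℝ) * R) := by
  have hkRε : 0 ≤ (k : ℝ) * R / ε := by positivity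
  rw [← rpow_mul hkRε, mul_one_div_cancel hR.ne', rpow_one, ← rpow_natCast, ← rpow_mul hkRε,
    mul_comm R]
  exact div_rpow_mul_exp_neg_mul_div_eq hε (by positivity)

lemma pow_mul_exp_neg_mul_rpow_le_factorial (hR : 0 < R) (hε : 0 < ε) (k : ℕ) {s : ℝ}
    (hs : 0 ≤ s) : s ^ k * exp (-(ε * s ^ (1 / R))) ≤ (k ! : ℝ) ^ R * ((R / ε) ^ R) ^ k := by
  refine (pow_mul_exp_neg_mul_rpow_le hR hε k hs).trans ?_
  rw [mul_div_mul_comm, mul_rpow_natCast_mul (by positivity) (by positivity)]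
  gcongr
  rw [div_pow, div_le_iff₀ (by positivity)]
  linarith [pow_le_exp_one_pow_mul_factorial k]

lemma exists_factorial_rpow_le_pow_mul_exp_neg (hR : 0 < R) (hε : 0 < ε) (k : ℕ) :
    ∃ s ≥ 0, (k ! : ℝ) ^ R ≤ ((exp 1 * ε / R) ^ R) ^ k * (s ^ k * exp (-(ε * s ^ (1 / R)))) := by
  refine ⟨((k : ℝ) * R / ε) ^ R, rpow_nonneg (by positivity) R, ?_⟩
  rw [pow_mul_exp_neg_mul_rpow_eq hR hε, mul_div_assoc (k : ℝ),
    mul_rpow_natCast_mul (by positivity) (by positivity)]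
  have hcancel : ((exp 1 * ε / R) ^ R) ^ k * ((R / (exp 1 * ε)) ^ R) ^ k = 1 := by
    rw [← mul_pow, ← mul_rpow (by positivity) (by positivity),
      div_mul_div_cancel₀ hR.ne', div_self (by positivity), one_rpow, one_pow]
  calc (k ! : ℝ) ^ R ≤ ((k : ℝ) ^ k) ^ R := by
        gcongr
        exact_mod_cast factorial_le_pow k
    _ = _ := by linear_combination (-((k : ℝ) ^ k) ^ R) * hcancel

end Weight

lemma summable_and_tsum_le_of_le_geometric {a : ℕ → ℝ} {C q : ℝ} (ha : ∀ k, 0 ≤ a k)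
    (hq₀ : 0 ≤ q) (hq₁ : q < 1) (h : ∀ k, a k ≤ C * q ^ k) :
    Summable a ∧ ∑' k, a k ≤ C / (1 - q) := by
  have hgeom : HasSum (fun k => C * q ^ k) (C / (1 - q)) := by
    simpa only [div_eq_mul_inv] using (hasSum_geometric_of_lt_one hq₀ hq₁).mul_left C
  have hsum : Summable a := hgeom.summable.of_nonneg_of_le ha h
  exact ⟨hsum, hasSum_le h hsum.hasSum hgeom⟩

section NonnegCoefficients

variable {c : ℕ → ℝ}

lemma summable_mul_pow_of_summable_ofReal (hF : ∀ z : ℂ, Summable fun k => (c k : ℂ) * z ^ k)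
    (r : ℝ) : Summable fun k => c k * r ^ k := by
  exact_mod_cast hF r

lemma norm_tsum_le_tsum_mul_norm_pow (hc : ∀ k, 0 ≤ c k)
    (hF : ∀ z : ℂ, Summable fun k => (c k : ℂ) * z ^ k) (z : ℂ) :
    ‖∑' k, (c k : ℂ) * z ^ k‖ ≤ ∑' k, c k * ‖z‖ ^ k := by
  have hnorm : ∀ k, ‖(c k : ℂ) * z ^ k‖ = c k * ‖z‖ ^ k := fun k => by
    rw [norm_mul, norm_pow, Complex.norm_of_nonneg (hc k)]
  simpa only [hnorm] using norm_tsum_le_tsum_norm (f := fun k => (c k : ℂ) * z ^ k)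
    (by simpa only [hnorm] using summable_mul_pow_of_summable_ofReal hF ‖z‖)

lemma mul_pow_le_norm_tsum (hc : ∀ k, 0 ≤ c k)
    (hF : ∀ z : ℂ, Summable fun k => (c k : ℂ) * z ^ k) {r : ℝ} (hr : 0 ≤ r) (k : ℕ) :
    c k * r ^ k ≤ ‖∑' j, (c j : ℂ) * (r : ℂ) ^ j‖ := by
  have hnonneg : ∀ j, 0 ≤ c j * r ^ j := fun j => mul_nonneg (hc j) (pow_nonneg hr j)
  have hreal : ∑' j, (c j : ℂ) * (r : ℂ) ^ j = ((∑' j, c j * r ^ j : ℝ) : ℂ) := by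
    push_cast
    rfl
  rw [hreal, Complex.norm_of_nonneg (tsum_nonneg hnonneg)]
  exact (summable_mul_pow_of_summable_ofReal hF r).le_tsum k fun j _ => hnonneg j

variable {R : ℝ}

theorem norm_tsum_mul_exp_neg_le_tsum_factorial_rpow (hR : 0 < R) (hc : ∀ k, 0 ≤ c k)
    (hF : ∀ z : ℂ, Summable fun k => (c k : ℂ) * z ^ k) {ε : ℝ} (hε : 0 < ε)
    (hq : Summable fun k : ℕ => (k ! : ℝ) ^ R * c k * ((R / ε) ^ R) ^ k) (z : ℂ) :
    ‖∑' k, (c k : ℂ) * z ^ k‖ * exp (-(ε * ‖z‖ ^ (1 / R))) ≤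
      ∑' k : ℕ, (k ! : ℝ) ^ R * c k * ((R / ε) ^ R) ^ k := by
  set E := exp (-(ε * ‖z‖ ^ (1 / R)))
  have hterm : ∀ k, c k * ‖z‖ ^ k * E ≤ (k ! : ℝ) ^ R * c k * ((R / ε) ^ R) ^ k := fun k =>
    calc c k * ‖z‖ ^ k * E = c k * (‖z‖ ^ k * E) := mul_assoc _ _ _
      _ ≤ c k * ((k ! : ℝ) ^ R * ((R / ε) ^ R) ^ k) :=
        mul_le_mul_of_nonneg_left
          (pow_mul_exp_neg_mul_rpow_le_factorial hR hε k (norm_nonneg z)) (hc k)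
      _ = (k ! : ℝ) ^ R * c k * ((R / ε) ^ R) ^ k := by ring
  calc ‖∑' k, (c k : ℂ) * z ^ k‖ * E ≤ (∑' k, c k * ‖z‖ ^ k) * E :=
        mul_le_mul_of_nonneg_right (norm_tsum_le_tsum_mul_norm_pow hc hF z) (exp_pos _).le
    _ = ∑' k, c k * ‖z‖ ^ k * E := tsum_mul_right.symm
    _ ≤ _ := ((summable_mul_pow_of_summable_ofReal hF _).mul_right E).tsum_le_tsum hterm hq

theorem summable_and_tsum_factorial_rpow_le (hR : 0 < R) (hc : ∀ k, 0 ≤ c k)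
    (hF : ∀ z : ℂ, Summable fun k => (c k : ℂ) * z ^ k) {c₀ ε Nb : ℝ} (hc₀ : 0 ≤ c₀)
    (hε : 0 < ε) (hq : c₀ * (exp 1 * ε / R) ^ R < 1)
    (hbound : ∀ z : ℂ, ‖∑' k, (c k : ℂ) * z ^ k‖ * exp (-(ε * ‖z‖ ^ (1 / R))) ≤ Nb) :
    (Summable fun k : ℕ => (k ! : ℝ) ^ R * c k * c₀ ^ k) ∧
      ∑' k : ℕ, (k ! : ℝ) ^ R * c k * c₀ ^ k ≤ Nb / (1 - c₀ * (exp 1 * ε / R) ^ R) := by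
  refine summable_and_tsum_le_of_le_geometric
    (fun k => mul_nonneg (mul_nonneg (by positivity) (hc k)) (pow_nonneg hc₀ k))
    (by positivity) hq fun k => ?_
  obtain ⟨s, hs, hfac⟩ := exists_factorial_rpow_le_pow_mul_exp_neg hR hε k
  have hterm : c k * s ^ k * exp (-(ε * s ^ (1 / R))) ≤ Nb := by
    have h := hbound s
    rw [Complex.norm_of_nonneg hs] at h
    exact (mul_le_mul_of_nonneg_right (mul_pow_le_norm_tsum hc hF hs k) (exp_pos _).le).trans h
  calc (k ! : ℝ) ^ R * c k * c₀ ^ k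
      ≤ ((exp 1 * ε / R) ^ R) ^ k * (s ^ k * exp (-(ε * s ^ (1 / R)))) * c k * c₀ ^ k :=
        mul_le_mul_of_nonneg_right (mul_le_mul_of_nonneg_right hfac (hc k)) (pow_nonneg hc₀ k)
    _ = (c₀ * (exp 1 * ε / R) ^ R) ^ k * (c k * s ^ k * exp (-(ε * s ^ (1 / R)))) := by
        rw [mul_pow]; ring
    _ ≤ (c₀ * (exp 1 * ε / R) ^ R) ^ k * Nb := by gcongr
    _ = Nb * (c₀ * (exp 1 * ε / R) ^ R) ^ k := mul_comm _ _

end NonnegCoefficients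

/-- Growth comparison of the two seminorm families on entire functions
`F(z) = Σ_k c_k z^k` with nonnegative coefficients:
(scalar facts) `k^k ≤ e^k k!` and `s^k e^{−εs^{1/R}} ≤ (kR/(eε))^{kR}`;
(i) for `ε > 0`, `‖F‖_{R,ε} = sup_z |F(z)|e^{−ε|z|^{1/R}} ≤ q_{R,(R/ε)^R}(F)`;
(ii) conversely for `c₀, ε > 0` with `c₀(eε/R)^R < 1`, if `Nb` bounds
`|F(z)|e^{−ε|z|^{1/R}}`, then `q_{R,c₀}(F) ≤ Nb/(1 − c₀(eε/R)^R)`,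
where `q_{R,c}(F) = Σ_k k!^R c_k c^k`. -/
theorem entire_order_type_norm_comparison (R : ℝ) (hR : 0 < R) (c : ℕ → ℝ)
    (hc : ∀ k, 0 ≤ c k) (hEnt : ∀ z : ℂ, Summable fun k : ℕ => (c k : ℂ) * z ^ k) :
    (∀ k : ℕ, (k : ℝ) ^ k ≤ Real.exp 1 ^ k * (k.factorial : ℝ)) ∧
    (∀ ε : ℝ, 0 < ε → ∀ (k : ℕ) (s : ℝ), 0 ≤ s →
      s ^ k * Real.exp (-(ε * s ^ (1 / R))) ≤
        ((k : ℝ) * R / (Real.exp 1 * ε)) ^ ((k : ℝ) * R)) ∧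
    (∀ ε : ℝ, 0 < ε →
      (Summable fun k : ℕ => (k.factorial : ℝ) ^ R * c k * ((R / ε) ^ R) ^ k) →
      ∀ z : ℂ, ‖∑' k : ℕ, (c k : ℂ) * z ^ k‖ * Real.exp (-(ε * ‖z‖ ^ (1 / R))) ≤
        ∑' k : ℕ, (k.factorial : ℝ) ^ R * c k * ((R / ε) ^ R) ^ k) ∧
    (∀ c0 ε Nb : ℝ, 0 < c0 → 0 < ε → c0 * (Real.exp 1 * ε / R) ^ R < 1 →
      (∀ z : ℂ, ‖∑' k : ℕ, (c k : ℂ) * z ^ k‖ * Real.exp (-(ε * ‖z‖ ^ (1 / R))) ≤ Nb) →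
      (Summable fun k : ℕ => (k.factorial : ℝ) ^ R * c k * c0 ^ k) ∧
      ∑' k : ℕ, (k.factorial : ℝ) ^ R * c k * c0 ^ k ≤
        Nb / (1 - c0 * (Real.exp 1 * ε / R) ^ R)) :=
  ⟨pow_le_exp_one_pow_mul_factorial,
    fun _ hε k _ hs => pow_mul_exp_neg_mul_rpow_le hR hε k hs,
    fun _ hε hq => norm_tsum_mul_exp_neg_le_tsum_factorial_rpow hR hc hEnt hε hq,
    fun _ _ _ hc₀ hε hq hbound =>
      summable_and_tsum_factorial_rpow_le hR hc hEnt hc₀.le hε hq hbound⟩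
end

section
/- On the symmetric algebra of the Lie algebra of a Lie group G, the standard-ordered star product of an invariant polynomial with a function satisfies the key mixed-product formula: (1 ⊗ ξ₁∨⋯∨ξ_k) ⋆_std (φ ⊗ 1) = Σ_{p=0}^{k} (ħ/i)^p (1/(p!(k−p)!)) Σ_{σ∈S_k} (L_{X_{ξ_{σ(1)}}}⋯L_{X_{ξ_{σ(p)}}}φ) ⊗ ξ_{σ(p+1)}∨⋯∨ξ_{σ(k)}; in particular, applying the operator Δ^ℓ defined by Δ(φ⊗ξ₁∨⋯∨ξ_k) = Σ_j (L_{X_{ξ_j}}φ)⊗ξ₁∨⋯ĵ⋯∨ξ_k gives Δ^ℓ(φ⊗ξ₁∨⋯∨ξ_k) = (1/(k−ℓ)!) Σ_{σ∈S_k} L_{X_{ξ_{σ(1)}}}⋯L_{X_{ξ_{σ(ℓ)}}}φ ⊗ ξ_{σ(ℓ+1)}∨⋯∨ξ_{σ(k)} for ℓ ≤ k, and zero for ℓ > k. -/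
open scoped TensorProduct

/-- The operator `Δ` on `A ⊗ Sym(𝔤_ℂ)` (with `Sym(𝔤_ℂ)` realized as polynomials in the
basis variables): `Δ(φ ⊗ P) = Σᵢ (Lᵢ φ) ⊗ ∂ᵢP`, so that on generators
`Δ(φ ⊗ ξ₁∨⋯∨ξ_k) = Σⱼ (L_{X_{ξⱼ}}φ) ⊗ ξ₁∨⋯ĵ⋯∨ξ_k`. -/
noncomputable def Delta {A : Type*} [AddCommGroup A] [Module ℂ A] {n : ℕ}
    (L : Fin n → Module.End ℂ A) :
    Module.End ℂ (TensorProduct ℂ A (MvPolynomial (Fin n) ℂ)) :=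
  ∑ i, TensorProduct.map (L i) (MvPolynomial.pderiv i).toLinearMap

/-- The linear polynomial representing the Lie algebra element with coordinates `v`. -/
noncomputable def linPoly {n : ℕ} (v : Fin n → ℂ) : MvPolynomial (Fin n) ℂ :=
  ∑ i, MvPolynomial.C (v i) * MvPolynomial.X i

/-- The Lie derivative `L_{X_ξ} = Σᵢ ξⁱ Lᵢ` for `ξ` with coordinates `v`. -/
noncomputable def lieDer {A : Type*} [AddCommGroup A] [Module ℂ A] {n : ℕ}
    (L : Fin n → Module.End ℂ A) (v : Fin n → ℂ) : Module.End ℂ A :=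
  ∑ i, v i • L i

/-! Summing over all permutations makes `Δ` act on the `ℓ`-th level of the formula as
multiplication by `k - ℓ`: applying `Δ` to a summand picks a remaining factor `ξ_{σ(t)}`
(`t ≥ ℓ`) and puts `L_{X_{ξ_{σ(t)}}}` in front of the word, and precomposing `σ` with the
cycle `(0 1 ⋯ t)⁻¹` turns this into a summand of level `ℓ + 1`. Hence
`Δ^ℓ (k! φ ⊗ ξ₁∨⋯∨ξ_k) = k (k - 1) ⋯ (k - ℓ + 1) Σ_σ (level ℓ summand)`, and this descending
factorial vanishes for `ℓ > k`. -/

theorem Derivation.leibniz_prod_finset {R B M : Type*} [CommSemiring R] [CommSemiring B]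
    [Algebra R B] [AddCommMonoid M] [Module B M] [Module R M] (D : Derivation R B M)
    {ι : Type*} [DecidableEq ι] (s : Finset ι) (f : ι → B) :
    D (∏ i ∈ s, f i) = ∑ i ∈ s, (∏ j ∈ s.erase i, f j) • D (f i) := by
  induction s using Finset.induction with
  | empty => simp
  | insert a s has ih =>
    rw [Finset.prod_insert has, D.leibniz, ih, Finset.sum_insert has, Finset.erase_insert has,
      Finset.smul_sum, add_comm]
    congr 1
    refine Finset.sum_congr rfl fun i hi => ?_
    rw [Finset.erase_insert_of_ne (ne_of_mem_of_not_mem hi has).symm,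
      Finset.prod_insert fun h => has (Finset.mem_of_mem_erase h), mul_smul]

theorem Fin.le_val_cycleRange_iff {k ℓ : ℕ} {t : Fin k} (ht : ℓ ≤ t) (u : Fin k) :
    ℓ + 1 ≤ (t.cycleRange u : ℕ) ↔ ℓ ≤ u ∧ u ≠ t := by
  rcases lt_trichotomy u t with hut | rfl | htu
  · rw [Fin.coe_cycleRange_of_lt hut]
    exact ⟨fun _ => ⟨by omega, hut.ne⟩, fun _ => by omega⟩
  · rw [Fin.coe_cycleRange_of_le le_rfl, if_pos rfl]
    simp
  · rw [Fin.cycleRange_of_gt htu]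
    have htu' : (t : ℕ) < u := htu
    exact ⟨fun _ => ⟨by omega, htu.ne'⟩, fun _ => by omega⟩

theorem Fin.map_cycleRange_symm_take_finRange {k ℓ : ℕ} {t : Fin k} (ht : ℓ ≤ t) :
    ((List.finRange k).take (ℓ + 1)).map t.cycleRange.symm = t :: (List.finRange k).take ℓ := by
  apply List.ext_getElem
  · simp only [List.length_map, List.length_take, List.length_finRange, List.length_cons]
    omega
  · intro i h₁ h₂
    simp only [List.getElem_map, List.getElem_take, List.getElem_finRange, Equiv.symm_apply_eq]
    rcases i with - | j
    · refine Fin.ext ?_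
      simp [Fin.coe_cycleRange_of_le le_rfl]
    · simp only [List.length_map, List.length_take, List.length_finRange] at h₁
      simp only [List.getElem_cons_succ, List.getElem_take, List.getElem_finRange]
      refine Fin.ext ?_
      rw [Fin.coe_cycleRange_of_lt (Fin.lt_def.mpr (by simp only [Fin.val_cast]; omega))]
      rfl

theorem Fin.card_filter_le_val (k ℓ : ℕ) :
    (Finset.univ.filter fun t : Fin k => ℓ ≤ (t : ℕ)).card = k - ℓ := by
  rw [← Finset.card_map Fin.valEmbedding, ← Nat.card_Ico]
  congr 1
  ext x
  simp only [Finset.mem_map, Finset.mem_filter, Finset.mem_univ, true_and,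
    Fin.valEmbedding_apply, Finset.mem_Ico]
  exact ⟨fun ⟨t, ht, hx⟩ => hx ▸ ⟨ht, t.isLt⟩, fun ⟨hx, hxk⟩ => ⟨⟨x, hxk⟩, hx, rfl⟩⟩

theorem pderiv_linPoly {n : ℕ} (i : Fin n) (v : Fin n → ℂ) :
    MvPolynomial.pderiv i (linPoly v) = MvPolynomial.C (v i) := by
  simp [linPoly, MvPolynomial.pderiv_X, Pi.single_apply]

section Delta

variable {A : Type*} [AddCommGroup A] [Module ℂ A] {n : ℕ} (L : Fin n → Module.End ℂ A)

theorem delta_tmul_prod_linPoly (ψ : A) {ι : Type*} [DecidableEq ι] (s : Finset ι)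
    (v : ι → Fin n → ℂ) :
    Delta L (ψ ⊗ₜ ∏ i ∈ s, linPoly (v i)) =
      ∑ i ∈ s, lieDer L (v i) ψ ⊗ₜ ∏ j ∈ s.erase i, linPoly (v j) := by
  have hpderiv (r : Fin n) :
      TensorProduct.map (L r) (MvPolynomial.pderiv r).toLinearMap
          (ψ ⊗ₜ ∏ i ∈ s, linPoly (v i)) =
        ∑ i ∈ s, (v i r • L r ψ) ⊗ₜ ∏ j ∈ s.erase i, linPoly (v j) := by
    rw [TensorProduct.map_tmul, Derivation.coeFn_coe,
      Derivation.leibniz_prod_finset, TensorProduct.tmul_sum]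
    refine Finset.sum_congr rfl fun i _ => ?_
    rw [pderiv_linPoly, smul_eq_mul, mul_comm, ← MvPolynomial.smul_eq_C_mul,
      TensorProduct.tmul_smul, TensorProduct.smul_tmul']
  simp only [Delta, LinearMap.sum_apply, hpderiv, lieDer, LinearMap.smul_apply,
    TensorProduct.sum_tmul]
  exact Finset.sum_comm

end Delta

section SplitTerm

open Equiv

variable {A : Type*} [AddCommGroup A] [Module ℂ A] {n k : ℕ} (L : Fin n → Module.End ℂ A)
  (φ : A) (ξ : Fin k → Fin n → ℂ)

noncomputable def lieWord (σ : Perm (Fin k)) (ℓ : ℕ) (ψ : A) : A :=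
  (((List.finRange k).take ℓ).map fun t => lieDer L (ξ (σ t))).foldr (fun E x => E x) ψ

/-- `L_{X_{ξ_{σ(0)}}} ⋯ L_{X_{ξ_{σ(ℓ-1)}}} φ ⊗ ξ_{σ(ℓ)} ∨ ⋯ ∨ ξ_{σ(k-1)}`. -/
noncomputable def splitTerm (ℓ : ℕ) (σ : Perm (Fin k)) : A ⊗[ℂ] MvPolynomial (Fin n) ℂ :=
  lieWord L ξ σ ℓ φ ⊗ₜ ∏ t ∈ Finset.univ.filter (fun t : Fin k => ℓ ≤ (t : ℕ)),
    linPoly (ξ (σ t))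

theorem sum_splitTerm_zero :
    ∑ σ : Perm (Fin k), splitTerm L φ ξ 0 σ = k.factorial • (φ ⊗ₜ ∏ j, linPoly (ξ j)) := by
  have hterm (σ : Perm (Fin k)) : splitTerm L φ ξ 0 σ = φ ⊗ₜ ∏ j, linPoly (ξ j) := by
    simp only [splitTerm, lieWord, List.take_zero, List.map_nil, List.foldr_nil, zero_le,
      Finset.filter_true]
    rw [Equiv.prod_comp σ fun j => linPoly (ξ j)]
  simp only [hterm, Finset.sum_const, Finset.card_univ, Fintype.card_perm, Fintype.card_fin]

theorem delta_splitTerm (ℓ : ℕ) (σ : Perm (Fin k)) :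
    Delta L (splitTerm L φ ξ ℓ σ) =
      ∑ t ∈ Finset.univ.filter (fun t : Fin k => ℓ ≤ (t : ℕ)),
        lieDer L (ξ (σ t)) (lieWord L ξ σ ℓ φ) ⊗ₜ
          ∏ u ∈ (Finset.univ.filter fun u : Fin k => ℓ ≤ (u : ℕ)).erase t, linPoly (ξ (σ u)) :=
  delta_tmul_prod_linPoly L _ _ fun t => ξ (σ t)

theorem splitTerm_succ_mul_cycleRange_symm {ℓ : ℕ} {t : Fin k} (ht : ℓ ≤ t)
    (σ : Perm (Fin k)) :
    splitTerm L φ ξ (ℓ + 1) (σ * t.cycleRange.symm) =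
      lieDer L (ξ (σ t)) (lieWord L ξ σ ℓ φ) ⊗ₜ
        ∏ u ∈ (Finset.univ.filter fun u : Fin k => ℓ ≤ (u : ℕ)).erase t, linPoly (ξ (σ u)) := by
  have hword : lieWord L ξ (σ * t.cycleRange.symm) (ℓ + 1) φ =
      lieDer L (ξ (σ t)) (lieWord L ξ σ ℓ φ) := by
    change List.foldr _ φ (List.map ((fun s => lieDer L (ξ (σ s))) ∘ t.cycleRange.symm) _) = _
    rw [← List.map_map, Fin.map_cycleRange_symm_take_finRange ht, List.map_cons,
      List.foldr_cons, lieWord]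
  refine congr_arg₂ _ hword (Finset.prod_equiv t.cycleRange.symm (fun s => ?_) fun _ _ => rfl)
  simpa [and_comm] using Fin.le_val_cycleRange_iff ht (t.cycleRange.symm s)

theorem delta_sum_splitTerm (ℓ : ℕ) :
    Delta L (∑ σ : Perm (Fin k), splitTerm L φ ξ ℓ σ) =
      (k - ℓ) • ∑ σ : Perm (Fin k), splitTerm L φ ξ (ℓ + 1) σ := by
  rw [map_sum]
  simp only [delta_splitTerm]
  rw [Finset.sum_comm, ← Fin.card_filter_le_val k ℓ, ← Finset.sum_const]
  refine Finset.sum_congr rfl fun t ht =>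
    Fintype.sum_equiv (Equiv.mulRight t.cycleRange.symm) _ _ fun σ =>
      (splitTerm_succ_mul_cycleRange_symm L φ ξ (Finset.mem_filter.mp ht).2 σ).symm

theorem delta_pow_sum_splitTerm_zero (ℓ : ℕ) :
    (Delta L ^ ℓ) (∑ σ : Perm (Fin k), splitTerm L φ ξ 0 σ) =
      k.descFactorial ℓ • ∑ σ : Perm (Fin k), splitTerm L φ ξ ℓ σ := by
  induction ℓ with
  | zero => simp
  | succ ℓ ih =>
    rw [pow_succ', Module.End.mul_apply, ih, map_nsmul, delta_sum_splitTerm, smul_smul,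
      Nat.descFactorial_succ, mul_comm]

end SplitTerm

/-- Powers of the operator `Δ` (whose exponential gives the mixed standard-ordered
star product `(1 ⊗ ξ₁∨⋯∨ξ_k) ⋆_std (φ ⊗ 1)`): for `ℓ ≤ k`,
`Δ^ℓ(φ ⊗ ξ₁∨⋯∨ξ_k) = (1/(k−ℓ)!) Σ_{σ∈S_k} (L_{X_{ξ_{σ(1)}}}⋯L_{X_{ξ_{σ(ℓ)}}}φ)
⊗ ξ_{σ(ℓ+1)}∨⋯∨ξ_{σ(k)}`, and `Δ^ℓ(φ ⊗ ξ₁∨⋯∨ξ_k) = 0` for `ℓ > k`. -/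
theorem delta_pow_formula {A : Type*} [AddCommGroup A] [Module ℂ A] {n : ℕ}
    (L : Fin n → Module.End ℂ A) (φ : A) (k : ℕ) (ξ : Fin k → (Fin n → ℂ)) :
    (∀ ℓ : ℕ, ℓ ≤ k →
      (Delta L ^ ℓ) (φ ⊗ₜ[ℂ] ∏ j, linPoly (ξ j)) =
        (((k - ℓ).factorial : ℂ))⁻¹ •
          ∑ σ : Equiv.Perm (Fin k),
            ((((List.finRange k).take ℓ).map (fun t => lieDer L (ξ (σ t)))).foldr
                (fun E x => E x) φ) ⊗ₜ[ℂ]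
              ∏ t ∈ Finset.univ.filter (fun t : Fin k => ℓ ≤ (t : ℕ)),
                linPoly (ξ (σ t))) ∧
    (∀ ℓ : ℕ, k < ℓ → (Delta L ^ ℓ) (φ ⊗ₜ[ℂ] ∏ j, linPoly (ξ j)) = 0) := by
  have hk : (k.factorial : ℂ) ≠ 0 := Nat.cast_ne_zero.mpr k.factorial_ne_zero
  have key (ℓ : ℕ) : (Delta L ^ ℓ) (φ ⊗ₜ[ℂ] ∏ j, linPoly (ξ j)) =
      ((k.factorial : ℂ)⁻¹ * k.descFactorial ℓ) • ∑ σ, splitTerm L φ ξ ℓ σ := by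
    rw [mul_smul, eq_inv_smul_iff₀ hk, ← map_smul, Nat.cast_smul_eq_nsmul, Nat.cast_smul_eq_nsmul,
      ← sum_splitTerm_zero, delta_pow_sum_splitTerm_zero]
  refine ⟨fun ℓ hℓ => ?_, fun ℓ hℓ => ?_⟩
  · have hfac : (k.factorial : ℂ) = (k - ℓ).factorial * k.descFactorial ℓ := by
      exact_mod_cast (Nat.factorial_mul_descFactorial hℓ).symm
    have hdesc : (k.descFactorial ℓ : ℂ) ≠ 0 := by
      exact_mod_cast (Nat.descFactorial_pos.mpr hℓ).ne'
    rw [key, hfac, mul_inv, mul_assoc, inv_mul_cancel₀ hdesc, mul_one]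
    rfl
  · rw [key, Nat.descFactorial_eq_zero_iff_lt.mpr hℓ, Nat.cast_zero, mul_zero, zero_smul]
end
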